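/- arXiv:1506.04194 — 2 statements merged into one kernel-verified Lean document; each statement's English description precedes it below -/
import Mathlib

section
/- Suppose for every i ∈ {1,...,M} and every k, the quadratic form z ↦ zᵀ(A_iᵀP_k + P_kA_i)z is bounded by B‖z‖² where B = max_{i,k} ‖A_iᵀP_k + P_kA_i‖·1, and let V(z) = min_k zᵀP_kz with P_k symmetric positive definite and V(z) ≥ C⁻‖z‖². If min_i DV(z; A_i z) ≤ −3κ V(z) for all z, and 0 < h₀ ≤ κ C⁻ / max_{i,k} ‖A_iᵀ(A_iᵀP_k + P_kA_i) + (A_iᵀP_k + P_kA_i)A_i‖, then for the feedback law ν(z) = argmin_i DV(z; A_i z) and any 0 < t < h₀: DV(e^{A_{ν(z)}t} z; A_{ν(z)} e^{A_{ν(z)}t} z) ≤ DV(z; A_{ν(z)}z) + t·(V(z)/C⁻)·max_{i,k}‖A_iᵀ(A_iᵀP_k+P_kA_i)+(A_iᵀP_k+P_kA_i)A_i‖ ≤ −2κ V(z). -/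
/-!
Along the held flow `x(s) = e^{sA}z`, `V(x(s)) = min_k F_k(s)` with `F_k(s) = x(s)ᵀP_k x(s)`,
`F_k' = xᵀ(AᵀP_k + P_kA)x`, and `|F_k''| ≤ K‖x‖²`. By Danskin's theorem `DV(y; Ay)` is the minimum
of `yᵀ(AᵀP_k + P_kA)y` over the indices `k` active at `y`. If `k` is active at `x(t)` and `j` at
`z`, then `F_k - F_j` passes from `≥ 0` to `≤ 0` on `[0, t]`, so `F_k' ≤ F_j'` at some
intermediate time, and the bound on the second derivatives gives
`F_k'(t) ≤ F_j'(0) + t K max ‖x‖²`. While `V(x(s)) ≤ V(z)` we have `‖x(s)‖² ≤ V(z)/C⁻`, which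
yields the first inequality; the choice of `h₀` makes its right-hand side `≤ -2κV(z) < 0`, and
this negative right derivative of `V` along the flow keeps `V(x(s)) ≤ V(z)` on all of `[0, t]`
(continuous induction).
-/

open Matrix Filter Topology Real Set MeasureTheory

noncomputable def toE {n : ℕ} (A : Matrix (Fin n) (Fin n) ℝ) :
    EuclideanSpace ℝ (Fin n) →L[ℝ] EuclideanSpace ℝ (Fin n) :=
  Matrix.toEuclideanCLM (𝕜 := ℝ) A

/-- The quadratic form `xᵀ P x`. -/
noncomputable def quad {n : ℕ} (P : Matrix (Fin n) (Fin n) ℝ)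
    (x : EuclideanSpace ℝ (Fin n)) : ℝ := inner ℝ x (toE P x)

/-- The one-sided directional derivative `DV(x;η)` of `V` at `x` in direction `η`
(defined via the limit along `δ ↓ 0`, when it exists). -/
noncomputable def DV {d : ℕ} (V : EuclideanSpace ℝ (Fin d) → ℝ)
    (x η : EuclideanSpace ℝ (Fin d)) : ℝ :=
  limUnder (𝓝[>] (0 : ℝ)) fun δ => (V (x + δ • η) - V x) / δ

section QuadraticForm

variable {n : ℕ}

theorem toE_add (A B : Matrix (Fin n) (Fin n) ℝ) : toE (A + B) = toE A + toE B :=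
  map_add _ A B

theorem toE_mul (A B : Matrix (Fin n) (Fin n) ℝ) : toE (A * B) = toE A * toE B :=
  map_mul _ A B

theorem toE_transpose (A : Matrix (Fin n) (Fin n) ℝ) :
    toE Aᵀ = ContinuousLinearMap.adjoint (toE A) := by
  rw [← conjTranspose_eq_transpose_of_trivial, ← ContinuousLinearMap.star_eq_adjoint]
  exact map_star _ A

def lyap (A P : Matrix (Fin n) (Fin n) ℝ) : Matrix (Fin n) (Fin n) ℝ := Aᵀ * P + P * A

theorem HasDerivAt.quad_of_flow {A P : Matrix (Fin n) (Fin n) ℝ}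
    {x : ℝ → EuclideanSpace ℝ (Fin n)} {s : ℝ} (hx : HasDerivAt x (toE A (x s)) s) :
    HasDerivAt (fun u => quad P (x u)) (quad (lyap A P) (x s)) s := by
  refine (hx.inner ℝ ((toE P).hasFDerivAt.comp_hasDerivAt s hx)).congr_deriv ?_
  simp only [quad, lyap, toE_add, toE_mul, toE_transpose, _root_.add_apply,
    mul_apply_eq_comp, inner_add_right, ContinuousLinearMap.adjoint_inner_right,
    Function.comp_apply]
  ring

theorem quad_le (P : Matrix (Fin n) (Fin n) ℝ) (x : EuclideanSpace ℝ (Fin n)) :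
    quad P x ≤ ‖toE P‖ * ‖x‖ ^ 2 :=
  calc quad P x ≤ ‖x‖ * ‖toE P x‖ := real_inner_le_norm _ _
    _ ≤ ‖x‖ * (‖toE P‖ * ‖x‖) := by gcongr; exact (toE P).le_opNorm x
    _ = ‖toE P‖ * ‖x‖ ^ 2 := by ring

theorem continuous_quad (P : Matrix (Fin n) (Fin n) ℝ) : Continuous (quad P) :=
  continuous_id.inner (toE P).continuous

end QuadraticForm

section Argmin

variable {ι : Type*} [Fintype ι]

noncomputable def argminSet (f : ι → ℝ) : Finset ι := Finset.univ.filter fun k => f k = ⨅ j, f j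

theorem mem_argminSet {f : ι → ℝ} {k : ι} : k ∈ argminSet f ↔ f k = ⨅ j, f j := by
  simp [argminSet]

theorem le_of_mem_argminSet {f : ι → ℝ} {k : ι} (hk : k ∈ argminSet f) (j : ι) : f k ≤ f j :=
  mem_argminSet.1 hk ▸ ciInf_le (Finite.bddBelow_range f) j

variable [Nonempty ι]

theorem argminSet_nonempty (f : ι → ℝ) : (argminSet f).Nonempty :=
  let ⟨k, hk⟩ := exists_eq_ciInf_of_finite (f := f)
  ⟨k, mem_argminSet.2 hk⟩

theorem continuous_ciInf_of_fintype {X : Type*} [TopologicalSpace X] {F : ι → X → ℝ}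
    (hF : ∀ k, Continuous (F k)) : Continuous fun x => ⨅ k, F k x := by
  simpa only [Finset.inf'_univ_eq_ciInf] using
    Continuous.finset_inf'_apply Finset.univ_nonempty fun k _ => hF k

theorem eventually_ciInf_eq_inf'_argminSet {F : ι → ℝ → ℝ} {s₀ : ℝ}
    (hF : ∀ k, ContinuousAt (F k) s₀) :
    ∀ᶠ s in 𝓝 s₀, ⨅ k, F k s = (argminSet (F · s₀)).inf' (argminSet_nonempty _) (F · s) := by
  obtain ⟨j, hj⟩ := argminSet_nonempty (F · s₀)
  have hsep : ∀ k, ∀ᶠ s in 𝓝 s₀, k ∈ argminSet (F · s₀) ∨ F j s < F k s := by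
    intro k
    by_cases hk : k ∈ argminSet (F · s₀)
    · exact .of_forall fun _ => .inl hk
    · have : F j s₀ < F k s₀ := (le_of_mem_argminSet hj k).lt_of_ne fun h =>
        hk (mem_argminSet.2 (h.symm.trans (mem_argminSet.1 hj)))
      exact ((hF j).eventually_lt (hF k) this).mono fun _ => .inr
  filter_upwards [eventually_all.2 hsep] with s hs
  refine le_antisymm (Finset.le_inf' _ _ fun k _ => ciInf_le (Finite.bddBelow_range _) k) ?_
  exact le_ciInf fun k => (hs k).elim (Finset.inf'_le _)
    fun h => (Finset.inf'_le _ hj).trans h.le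

/-- Danskin's theorem for a finite minimum. -/
theorem hasDerivWithinAt_ciInf {F : ι → ℝ → ℝ} {d : ι → ℝ} {s₀ : ℝ}
    (hF : ∀ k, HasDerivAt (F k) (d k) s₀) :
    HasDerivWithinAt (fun s => ⨅ k, F k s)
      ((argminSet (F · s₀)).inf' (argminSet_nonempty _) d) (Ioi s₀) s₀ := by
  rw [hasDerivWithinAt_iff_tendsto_slope' self_notMem_Ioi]
  have hslope : ∀ k, Tendsto (slope (F k) s₀) (𝓝[>] s₀) (𝓝 (d k)) := fun k =>
    (hasDerivWithinAt_iff_tendsto_slope' self_notMem_Ioi).1 (hF k).hasDerivWithinAt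
  refine (Tendsto.finset_inf'_nhds_apply _ fun k _ => hslope k).congr' ?_
  filter_upwards [nhdsWithin_le_nhds (eventually_ciInf_eq_inf'_argminSet fun k =>
    (hF k).continuousAt), self_mem_nhdsWithin] with s hs (hs₀ : s₀ < s)
  set g : ℝ → ℝ := fun y => (y - ⨅ k, F k s₀) / (s - s₀)
  have hg : Monotone g := fun a b hab =>
    div_le_div_of_nonneg_right (sub_le_sub_right hab _) (sub_pos.2 hs₀).le
  rw [slope_def_field, hs]
  change _ = g _
  rw [Finset.apply_inf'_eq_inf'_comp _ g fun _ _ => hg.map_min]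
  refine Finset.inf'_congr _ rfl fun k hk => ?_
  simp only [Function.comp_apply, g, ← mem_argminSet.1 hk, slope_def_field]

end Argmin

theorem DV_eq_of_hasDerivWithinAt {d : ℕ} {V : EuclideanSpace ℝ (Fin d) → ℝ}
    {x η : EuclideanSpace ℝ (Fin d)} {L : ℝ}
    (h : HasDerivWithinAt (fun δ : ℝ => V (x + δ • η)) L (Ioi 0) 0) : DV V x η = L := by
  refine Tendsto.limUnder_eq ?_
  refine ((hasDerivWithinAt_iff_tendsto_slope' self_notMem_Ioi).1 h).congr fun δ => ?_
  simp [slope_def_field]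

theorem HasDerivWithinAt.eventually_lt_of_neg {f : ℝ → ℝ} {f' u : ℝ}
    (hf : HasDerivWithinAt f f' (Ioi u) u) (hf' : f' < 0) : ∀ᶠ r in 𝓝[>] u, f r < f u := by
  have := ((hasDerivWithinAt_iff_tendsto_slope' self_notMem_Ioi).1 hf).eventually_lt_const hf'
  filter_upwards [this, self_mem_nhdsWithin] with r hr (hur : u < r)
  rw [slope_def_field, div_neg_iff] at hr
  rcases hr with ⟨-, h⟩ | ⟨h, -⟩ <;> linarith

theorem sub_le_mul_sub_of_hasDerivAt_le {g g' : ℝ → ℝ} {a b L : ℝ} (hab : a ≤ b)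
    (hg : ∀ s, HasDerivAt g (g' s) s) (hL : ∀ s ∈ Icc a b, g' s ≤ L) :
    g b - g a ≤ L * (b - a) :=
  (convex_Icc a b).image_sub_le_mul_sub_of_deriv_le
    (HasDerivAt.continuousOn fun s _ => hg s)
    (fun s _ => (hg s).differentiableAt.differentiableWithinAt)
    (fun s hs => (hg s).deriv ▸ hL s (interior_subset hs)) a ⟨le_rfl, hab⟩ b ⟨hab, le_rfl⟩ hab

theorem le_add_mul_of_crossing {f₁ f₂ g₁ g₂ g₁' g₂' : ℝ → ℝ} {a b L : ℝ} (hab : a < b)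
    (hf₁ : ∀ s, HasDerivAt f₁ (g₁ s) s) (hf₂ : ∀ s, HasDerivAt f₂ (g₂ s) s)
    (hg₁ : ∀ s, HasDerivAt g₁ (g₁' s) s) (hg₂ : ∀ s, HasDerivAt g₂ (g₂' s) s)
    (hL₁ : ∀ s ∈ Icc a b, g₁' s ≤ L) (hL₂ : ∀ s ∈ Icc a b, g₂' s ≤ L)
    (ha : f₂ a ≤ f₁ a) (hb : f₁ b ≤ f₂ b) : g₁ b ≤ g₂ a + (b - a) * L := by
  obtain ⟨c, ⟨hac, hcb⟩, hc⟩ := exists_hasDerivAt_eq_slope (fun s => f₁ s - f₂ s)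
    (fun s => g₁ s - g₂ s) hab (HasDerivAt.continuousOn fun s _ => (hf₁ s).sub (hf₂ s))
    fun s _ => (hf₁ s).sub (hf₂ s)
  have hgc : g₁ c ≤ g₂ c := by
    have : ((f₁ b - f₂ b) - (f₁ a - f₂ a)) / (b - a) ≤ 0 :=
      div_nonpos_of_nonpos_of_nonneg (by linarith) (by linarith)
    linarith
  have h₁ := sub_le_mul_sub_of_hasDerivAt_le hcb.le hg₁ fun s hs =>
    hL₁ s ⟨hac.le.trans hs.1, hs.2⟩
  have h₂ := sub_le_mul_sub_of_hasDerivAt_le hac.le hg₂ fun s hs =>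
    hL₂ s ⟨hs.1, hs.2.trans hcb.le⟩
  linarith

theorem hasDerivAt_exp_smul_apply {E : Type*} [NormedAddCommGroup E] [NormedSpace ℝ E]
    [CompleteSpace E] (A : E →L[ℝ] E) (z : E) (s : ℝ) :
    HasDerivAt (fun u : ℝ => NormedSpace.exp (u • A) z) (A (NormedSpace.exp (s • A) z)) s :=
  (ContinuousLinearMap.apply ℝ E z).hasFDerivAt.comp_hasDerivAt s
    (hasDerivAt_exp_smul_const' (𝕂 := ℝ) A s)

section MinQuadratic

variable {ι : Type*} [Fintype ι] [Nonempty ι] {n : ℕ} {P : ι → Matrix (Fin n) (Fin n) ℝ}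
  {V : EuclideanSpace ℝ (Fin n) → ℝ} {A : Matrix (Fin n) (Fin n) ℝ}

theorem DV_eq_inf'_argminSet (hV : ∀ z, V z = ⨅ k, quad (P k) z) (y : EuclideanSpace ℝ (Fin n)) :
    DV V y (toE A y) = (argminSet fun k => quad (P k) y).inf' (argminSet_nonempty _)
      fun k => quad (lyap A (P k)) y := by
  have hline : HasDerivAt (fun δ : ℝ => y + δ • toE A y) (toE A (y + (0 : ℝ) • toE A y)) 0 := by
    simpa using ((hasDerivAt_id (0 : ℝ)).smul_const (toE A y)).const_add y
  refine DV_eq_of_hasDerivWithinAt ?_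
  simpa only [hV, zero_smul, add_zero] using
    hasDerivWithinAt_ciInf fun k => hline.quad_of_flow (P := P k)

theorem hasDerivWithinAt_comp_flow (hV : ∀ z, V z = ⨅ k, quad (P k) z)
    {x : ℝ → EuclideanSpace ℝ (Fin n)} (hx : ∀ s, HasDerivAt x (toE A (x s)) s) (u : ℝ) :
    HasDerivWithinAt (fun s => V (x s)) (DV V (x u) (toE A (x u))) (Ioi u) u := by
  rw [DV_eq_inf'_argminSet hV]
  simpa only [hV] using hasDerivWithinAt_ciInf fun k => (hx u).quad_of_flow (P := P k)

theorem DV_flow_le (hV : ∀ z, V z = ⨅ k, quad (P k) z) {x : ℝ → EuclideanSpace ℝ (Fin n)}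
    (hx : ∀ s, HasDerivAt x (toE A (x s)) s)
    {K R t : ℝ} (ht : 0 ≤ t) (hK : ∀ k, ‖toE (lyap A (lyap A (P k)))‖ ≤ K)
    (hR : ∀ s ∈ Icc 0 t, ‖x s‖ ^ 2 ≤ R) :
    DV V (x t) (toE A (x t)) ≤ DV V (x 0) (toE A (x 0)) + t * R * K := by
  rcases ht.eq_or_lt with rfl | ht
  · simp
  obtain ⟨j, hj, hDV₀⟩ := Finset.exists_mem_eq_inf' (argminSet_nonempty _)
    fun k => quad (lyap A (P k)) (x 0)
  obtain ⟨k, hk⟩ := argminSet_nonempty fun k => quad (P k) (x t)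
  rw [DV_eq_inf'_argminSet hV, DV_eq_inf'_argminSet hV, hDV₀]
  have hbound : ∀ i, ∀ s ∈ Icc 0 t, quad (lyap A (lyap A (P i))) (x s) ≤ R * K := fun i s hs =>
    calc _ ≤ ‖toE (lyap A (lyap A (P i)))‖ * ‖x s‖ ^ 2 := quad_le _ _
      _ ≤ K * R := by gcongr; exacts [(norm_nonneg _).trans (hK i), hK i, hR s hs]
      _ = R * K := mul_comm _ _
  refine (Finset.inf'_le _ hk).trans ?_
  have := le_add_mul_of_crossing ht (fun s => (hx s).quad_of_flow (P := P k))
    (fun s => (hx s).quad_of_flow (P := P j)) (fun s => (hx s).quad_of_flow)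
    (fun s => (hx s).quad_of_flow) (hbound k) (hbound j) (le_of_mem_argminSet hj k)
    (le_of_mem_argminSet hk j)
  simpa [mul_assoc] using this

theorem comp_flow_le_of_DV_neg (hV : ∀ z, V z = ⨅ k, quad (P k) z)
    {x : ℝ → EuclideanSpace ℝ (Fin n)} (hx : ∀ s, HasDerivAt x (toE A (x s)) s) {c t : ℝ}
    (h₀ : V (x 0) ≤ c)
    (hneg : ∀ u ∈ Ico 0 t, (∀ s ∈ Icc 0 u, V (x s) ≤ c) → DV V (x u) (toE A (x u)) < 0) :
    ∀ s ∈ Icc 0 t, V (x s) ≤ c := by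
  have hW : Continuous fun s => V (x s) := by
    simp only [hV]
    exact continuous_ciInf_of_fintype fun k => (continuous_quad (P k)).comp
      (continuous_iff_continuousAt.2 fun s => (hx s).continuousAt)
  refine IsClosed.Icc_subset_of_forall_mem_nhdsGT_of_Icc_subset (s := {s | V (x s) ≤ c})
    ((isClosed_le hW continuous_const).inter isClosed_Icc) h₀ fun u hu hsub => ?_
  filter_upwards [(hasDerivWithinAt_comp_flow hV hx u).eventually_lt_of_neg (hneg u hu hsub)]
    with r hr
  exact hr.le.trans (hsub ⟨hu.1, le_rfl⟩)

end MinQuadratic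

theorem stmt17_general {n m M : ℕ} (hm : 0 < m)
    (P : Fin m → Matrix (Fin n) (Fin n) ℝ)
    (A : Fin M → Matrix (Fin n) (Fin n) ℝ)
    (V : EuclideanSpace ℝ (Fin n) → ℝ) (hV : ∀ z, V z = ⨅ k, quad (P k) z)
    (Cm : ℝ) (hCm : 0 < Cm) (hCmV : ∀ z : EuclideanSpace ℝ (Fin n), Cm * ‖z‖ ^ 2 ≤ V z)
    (K : ℝ) (hK : K = ⨆ i, ⨆ k,
      ‖toE ((A i)ᵀ * ((A i)ᵀ * P k + P k * A i) + ((A i)ᵀ * P k + P k * A i) * A i)‖)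
    (κ : ℝ) (hκ : 0 < κ)
    (hdec : ∀ z : EuclideanSpace ℝ (Fin n), (⨅ i, DV V z (toE (A i) z)) ≤ -3 * κ * V z)
    (h₀ : ℝ) (hh₀K : h₀ * K ≤ κ * Cm)
    (ν : EuclideanSpace ℝ (Fin n) → Fin M)
    (hν : ∀ z i, DV V z (toE (A (ν z)) z) ≤ DV V z (toE (A i) z)) :
    ∀ z : EuclideanSpace ℝ (Fin n), ∀ t : ℝ, 0 < t → t < h₀ →
      DV V (NormedSpace.exp (t • toE (A (ν z))) z)
          (toE (A (ν z)) (NormedSpace.exp (t • toE (A (ν z))) z)) ≤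
        DV V z (toE (A (ν z)) z) + t * (V z / Cm) * K ∧
      DV V z (toE (A (ν z)) z) + t * (V z / Cm) * K ≤ -2 * κ * V z := by
  intro z t ht hth
  have : Nonempty (Fin m) := ⟨⟨0, hm⟩⟩
  have : Nonempty (Fin M) := ⟨ν z⟩
  set x : ℝ → EuclideanSpace ℝ (Fin n) := fun s => NormedSpace.exp (s • toE (A (ν z))) z
  have hx : ∀ s, HasDerivAt x (toE (A (ν z)) (x s)) s := hasDerivAt_exp_smul_apply _ z
  have hx₀ : x 0 = z := by simp [x, zero_smul ℝ (toE _)]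
  have hKk : ∀ k, ‖toE (lyap (A (ν z)) (lyap (A (ν z)) (P k)))‖ ≤ K := fun k =>
    hK ▸ le_ciSup_of_le (Finite.bddAbove_range _) (ν z)
      (le_ciSup (f := fun k => ‖toE (lyap (A (ν z)) (lyap (A (ν z)) (P k)))‖)
        (Finite.bddAbove_range _) k)
  have hK₀ : 0 ≤ K := (norm_nonneg _).trans (hKk ⟨0, hm⟩)
  have hVz : 0 ≤ V z / Cm := div_nonneg ((by positivity : 0 ≤ Cm * ‖z‖ ^ 2).trans (hCmV z)) hCm.le
  have hslack : ∀ s, 0 ≤ s → s ≤ h₀ → s * (V z / Cm) * K ≤ κ * V z := fun s hs hsh =>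
    calc s * (V z / Cm) * K ≤ h₀ * K * (V z / Cm) := by rw [mul_right_comm]; gcongr
      _ ≤ κ * Cm * (V z / Cm) := by gcongr
      _ = κ * V z := by field_simp
  have hdecz : DV V z (toE (A (ν z)) z) ≤ -3 * κ * V z := (le_ciInf (hν z)).trans (hdec z)
  have hkey : ∀ u, 0 ≤ u → (∀ s ∈ Icc 0 u, V (x s) ≤ V z) →
      DV V (x u) (toE (A (ν z)) (x u)) ≤ DV V z (toE (A (ν z)) z) + u * (V z / Cm) * K := by
    intro u hu hsub
    have hR : ∀ s ∈ Icc 0 u, ‖x s‖ ^ 2 ≤ V z / Cm := fun s hs => by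
      rw [le_div_iff₀ hCm, mul_comm]
      exact (hCmV _).trans (hsub s hs)
    simpa only [hx₀] using DV_flow_le hV hx hu hKk hR
  have hmono : ∀ s ∈ Icc 0 t, V (x s) ≤ V z := by
    rcases eq_or_ne z 0 with rfl | hz
    · simp [x]
    have hVpos : 0 < V z := (mul_pos hCm (pow_pos (norm_pos_iff.2 hz) 2)).trans_le (hCmV z)
    refine comp_flow_le_of_DV_neg hV hx (congrArg V hx₀).le fun u hu hsub => ?_
    linarith [hkey u hu.1 hsub, hslack u hu.1 (hu.2.le.trans hth.le), mul_pos hκ hVpos]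
  exact ⟨hkey t ht.le hmono, by linarith [hslack t ht.le hth.le]⟩

/-- Key sample-and-hold estimate: under the decreasing condition
`minᵢ DV(z; Aᵢz) ≤ -3κ V(z)` and a small enough hold time `h₀`, along the held mode
`ν(z) = argminᵢ DV(z; Aᵢz)` the directional derivative stays `≤ -2κ V(z)` on `(0, h₀)`. -/
theorem stmt17 {n m M : ℕ} (hm : 0 < m) (hM : 0 < M)
    (P : Fin m → Matrix (Fin n) (Fin n) ℝ) (hpd : ∀ k, (P k).PosDef)
    (A : Fin M → Matrix (Fin n) (Fin n) ℝ)
    (V : EuclideanSpace ℝ (Fin n) → ℝ) (hV : ∀ z, V z = ⨅ k, quad (P k) z)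
    (Cm : ℝ) (hCm : 0 < Cm) (hCmV : ∀ z : EuclideanSpace ℝ (Fin n), Cm * ‖z‖ ^ 2 ≤ V z)
    (B : ℝ) (hBdef : B = ⨆ i, ⨆ k, ‖toE ((A i)ᵀ * P k + P k * A i)‖)
    (hB : ∀ i k, ∀ z : EuclideanSpace ℝ (Fin n),
      |inner (𝕜 := ℝ) z (toE ((A i)ᵀ * P k + P k * A i) z)| ≤ B * ‖z‖ ^ 2)
    (K : ℝ) (hK : K = ⨆ i, ⨆ k,
      ‖toE ((A i)ᵀ * ((A i)ᵀ * P k + P k * A i) + ((A i)ᵀ * P k + P k * A i) * A i)‖)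
    (κ : ℝ) (hκ : 0 < κ)
    (hdec : ∀ z : EuclideanSpace ℝ (Fin n), (⨅ i, DV V z (toE (A i) z)) ≤ -3 * κ * V z)
    (h₀ : ℝ) (hh₀ : 0 < h₀) (hh₀K : h₀ * K ≤ κ * Cm)
    (ν : EuclideanSpace ℝ (Fin n) → Fin M)
    (hν : ∀ z i, DV V z (toE (A (ν z)) z) ≤ DV V z (toE (A i) z)) :
    ∀ z : EuclideanSpace ℝ (Fin n), ∀ t : ℝ, 0 < t → t < h₀ →
      DV V (NormedSpace.exp (t • toE (A (ν z))) z)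
          (toE (A (ν z)) (NormedSpace.exp (t • toE (A (ν z))) z)) ≤
        DV V z (toE (A (ν z)) z) + t * (V z / Cm) * K ∧
      DV V z (toE (A (ν z)) z) + t * (V z / Cm) * K ≤ -2 * κ * V z :=
  stmt17_general hm P A V hV Cm hCm hCmV K hK κ hκ hdec h₀ hh₀K ν hν
end

section
/- Let f : ℝⁿ → ℝⁿ be measurable and locally bounded, and suppose f(x) ∈ {A₁x,...,A_Mx} for all x (i.e., f(x) = A_{ν(x)}x for a measurable ν : ℝⁿ → {1,...,M}). Then the Filippov set-valued map F[f](x) = ⋂_{δ>0} ⋂_{μ(S)=0} conv-closure f(B(x,δ)\S) satisfies F[f](x) ⊆ conv{A₁x, ..., A_Mx} = {Σ_{i=1}^M α_i A_i x : α ∈ Δ_M} for every x. Consequently every Filippov solution of ẋ = A_{ν(x)}x is an absolutely continuous solution of the relaxed differential inclusion ẋ(t) ∈ {Σ_i α_i A_i x(t) : α ∈ Δ_M}. -/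
open Matrix Filter Topology Real Set MeasureTheory

/-- The Filippov set-valued map of a vector field `f`. -/
noncomputable def filippov {d : ℕ}
    (f : EuclideanSpace ℝ (Fin d) → EuclideanSpace ℝ (Fin d))
    (x : EuclideanSpace ℝ (Fin d)) : Set (EuclideanSpace ℝ (Fin d)) :=
  ⋂ (δ : ℝ) (_ : 0 < δ) (S : Set (EuclideanSpace ℝ (Fin d))) (_ : volume S = 0),
    closure (convexHull ℝ (f '' (Metric.ball x δ \ S)))

/-- Membership in the convex hull of the range of a map from `Fin M` gives convex weights. -/
lemma mem_convexHull_range_fin {M : ℕ} {E : Type*} [AddCommGroup E] [Module ℝ E]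
    (g : Fin M → E) {v : E} (hv : v ∈ convexHull ℝ (Set.range g)) :
    ∃ α : Fin M → ℝ, (∀ i, 0 ≤ α i) ∧ ∑ i, α i = 1 ∧ ∑ i, α i • g i = v := by
  rw [convexHull_range_eq_exists_affineCombination] at hv
  obtain ⟨s, w, hw₀, hw₁, hws⟩ := hv
  refine ⟨fun i => if i ∈ s then w i else 0, fun i => by by_cases h : i ∈ s <;> simp [h, hw₀ i], ?_, ?_⟩
  · rw [Finset.sum_ite_mem, Finset.univ_inter, hw₁]
  · rw [← hws, s.affineCombination_eq_linear_combination _ _ hw₁]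
    rw [show ∑ i, (if i ∈ s then w i else 0) • g i
        = ∑ i, (if i ∈ s then w i • g i else 0) by
      refine Finset.sum_congr rfl fun i _ => ?_; split <;> simp]
    rw [Finset.sum_ite_mem, Finset.univ_inter]

/-- For the closed-loop switched vector field `f(x) = A_{ν(x)} x`, the Filippov set-valued
map is contained in `conv{A₁x,…,A_Mx}`; consequently every Filippov solution solves the
relaxed differential inclusion `ẋ(t) = Σᵢ αᵢ Aᵢ x(t)`, `α ∈ Δ_M`. -/
theorem stmt19 {n M : ℕ} (hM : 0 < M) (A : Fin M → Matrix (Fin n) (Fin n) ℝ)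
    (ν : EuclideanSpace ℝ (Fin n) → Fin M) (hν : Measurable ν)
    (f : EuclideanSpace ℝ (Fin n) → EuclideanSpace ℝ (Fin n))
    (hf : ∀ x, f x = toE (A (ν x)) x) :
    (∀ x : EuclideanSpace ℝ (Fin n),
      filippov f x ⊆ convexHull ℝ (Set.range fun i => toE (A i) x)) ∧
    ∀ (T : ℝ) (_ : 0 < T) (x : ℝ → EuclideanSpace ℝ (Fin n)),
      (∀ᵐ t ∂volume.restrict (Set.Icc (0 : ℝ) T),
        ∃ v ∈ filippov f (x t), HasDerivAt x v t) →
      ∀ᵐ t ∂volume.restrict (Set.Icc (0 : ℝ) T),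
        ∃ α : Fin M → ℝ, (∀ i, 0 ≤ α i) ∧ ∑ i, α i = 1 ∧
          HasDerivAt x (∑ i, α i • toE (A i) (x t)) t := by
  -- operator norm bound
  obtain ⟨C, hC0, hC⟩ : ∃ C : ℝ, 0 ≤ C ∧ ∀ i, ‖toE (A i)‖ ≤ C := by
    refine ⟨∑ i, ‖toE (A i)‖, Finset.sum_nonneg fun i _ => norm_nonneg _, fun i => ?_⟩
    exact Finset.single_le_sum (f := fun i => ‖toE (A i)‖)
      (fun j _ => norm_nonneg _) (Finset.mem_univ i)
  have key : ∀ x : EuclideanSpace ℝ (Fin n),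
      filippov f x ⊆ convexHull ℝ (Set.range fun i => toE (A i) x) := by
    intro x y hy
    set K' : Set (EuclideanSpace ℝ (Fin n)) :=
      convexHull ℝ (Set.range fun i => toE (A i) x) with hK'
    have hK'closed : IsClosed K' :=
      ((Set.finite_range _).isCompact_convexHull (𝕜 := ℝ)).isClosed
    have hK'conv : Convex ℝ K' := convex_convexHull _ _
    -- y is within ε of K' for every ε > 0
    have hthick : ∀ ε : ℝ, 0 < ε → y ∈ Metric.cthickening ε K' := by
      intro ε hε
      set δ : ℝ := ε / (C + 1) with hδdef
      have hδ : 0 < δ := div_pos hε (by linarith)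
      have hy' : y ∈ closure (convexHull ℝ (f '' (Metric.ball x δ \ ∅))) := by
        have := Set.mem_iInter.1 hy δ
        have := Set.mem_iInter.1 this hδ
        have := Set.mem_iInter.1 this ∅
        exact Set.mem_iInter.1 this (by simp)
      rw [Set.diff_empty] at hy'
      have himg : f '' Metric.ball x δ ⊆ Metric.cthickening ε K' := by
        rintro _ ⟨z, hz, rfl⟩
        have hd : dist (f z) (toE (A (ν z)) x) ≤ ε := by
          rw [hf z, dist_eq_norm, ← map_sub]
          calc ‖toE (A (ν z)) (z - x)‖ ≤ ‖toE (A (ν z))‖ * ‖z - x‖ :=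
                (toE (A (ν z))).le_opNorm _
            _ ≤ C * δ := by
                apply mul_le_mul (hC _) _ (norm_nonneg _) hC0
                exact le_of_lt (by rwa [Metric.mem_ball, dist_eq_norm] at hz)
            _ ≤ ε := by
                rw [hδdef]
                rw [div_eq_inv_mul, ← mul_assoc]
                have : C * (C + 1)⁻¹ ≤ 1 := by
                  rw [mul_inv_le_iff₀ (by linarith)]; linarith
                nlinarith
        have hmem : toE (A (ν z)) x ∈ K' :=
          subset_convexHull ℝ _ ⟨ν z, rfl⟩
        exact Metric.mem_cthickening_of_dist_le _ _ _ _ hmem hd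
      have hconv : convexHull ℝ (f '' Metric.ball x δ) ⊆ Metric.cthickening ε K' :=
        convexHull_min himg (hK'conv.cthickening ε)
      exact closure_minimal hconv Metric.isClosed_cthickening hy'
    have : y ∈ closure K' := by
      rw [Metric.closure_eq_iInter_cthickening]
      exact Set.mem_iInter₂.2 fun ε hε => hthick ε hε
    rwa [hK'closed.closure_eq] at this
  refine ⟨key, ?_⟩
  intro T hT x hx
  filter_upwards [hx] with t ht
  obtain ⟨v, hv, hder⟩ := ht
  obtain ⟨α, hα0, hα1, hαv⟩ := mem_convexHull_range_fin _ (key (x t) hv)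
  exact ⟨α, hα0, hα1, by rwa [hαv]⟩
end
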